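/- Let i and N be positive integers and let m, m₁, m₂ be nonnegative integers with 0 ≤ m, m₁, m₂ ≤ C(N,i) and m₁ + m₂ = m + C(N,i). Then m₁^(i) + m₂^(i) ≤ m^(i) + C(N, i+1). -/

import Mathlib

/-- The upper `i`-boundary `m^(i)`, computed greedily from the unique binomial
representation `m = C(n_i,i) + C(n_{i-1},i-1) + ... + C(n_j,j)`
(with `n_i > n_{i-1} > ... > n_j ≥ j ≥ 1`) as
`m^(i) = C(n_i,i+1) + C(n_{i-1},i) + ... + C(n_j,j+1)`;
by convention `0^(i) = 0`. -/
def ub : ℕ → ℕ → ℕ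
  | 0, _ => 0
  | i + 1, m =>
    if m = 0 then 0
    else
      Nat.choose (Nat.findGreatest (fun t => Nat.choose t (i + 1) ≤ m) (m + i + 1)) (i + 2) +
        ub i (m - Nat.choose (Nat.findGreatest (fun t => Nat.choose t (i + 1) ≤ m) (m + i + 1)) (i + 1))

lemma ub_zero (j : ℕ) : ub j 0 = 0 := by cases j <;> simp [ub]

lemma choose_ge (j n : ℕ) (h1 : 1 ≤ j) (h2 : j ≤ n) : n + 1 ≤ n.choose j + j := by
  induction n with
  | zero => omega
  | succ n ih =>
    rcases Nat.lt_or_ge j (n+1) with h | h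
    · have hj : j ≤ n := by omega
      have := ih hj
      have h2 : 0 < n.choose (j-1) := Nat.choose_pos (by omega)
      have e : (n+1).choose j = n.choose (j-1) + n.choose j := by
        obtain ⟨j', rfl⟩ : ∃ j', j = j' + 1 := ⟨j - 1, by omega⟩
        simpa using Nat.choose_succ_succ' n j'
      omega
    · have hj : j = n + 1 := by omega
      subst hj
      simp [Nat.choose_self]

lemma choose_lt (j n : ℕ) (h1 : 1 ≤ j) (h2 : j ≤ n) : n.choose j < (n+1).choose j := by
  obtain ⟨j', rfl⟩ : ∃ j', j = j' + 1 := ⟨j - 1, by omega⟩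
  rw [Nat.choose_succ_succ' n j']
  have : 0 < n.choose j' := Nat.choose_pos (by omega)
  omega

lemma exists_row (j x : ℕ) (hj : 1 ≤ j) (hx : 1 ≤ x) :
    ∃ n, j ≤ n ∧ n.choose j ≤ x ∧ x < (n+1).choose j := by
  classical
  set P : ℕ → Prop := fun t => t.choose j ≤ x with hP
  have hinst : DecidablePred P := fun t => by unfold P; infer_instance
  set n := Nat.findGreatest P (x + j) with hn
  have hjn : j ≤ n := by
    apply Nat.le_findGreatest (by omega)
    show j.choose j ≤ x
    simp [Nat.choose_self]; omega
  have hPn : P n := Nat.findGreatest_spec (P := P) (m := j) (by omega)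
    (by show j.choose j ≤ x; simp [Nat.choose_self]; omega)
  refine ⟨n, hjn, hPn, ?_⟩
  rcases Nat.lt_or_ge (n+1) (x + j + 1) with h | h
  · have := Nat.findGreatest_is_greatest (P := P) (n := x + j) (k := n + 1)
      (by omega) (by omega)
    simpa [P] using this
  · -- n ≥ x + j : impossible-ish; then choose is big
    have h1 : n + 1 ≤ n.choose j + j := choose_ge j n hj hjn
    have h2 : n.choose j ≤ x := hPn
    have hlt : n.choose j < (n+1).choose j := choose_lt j n hj hjn
    omega

lemma ub_row (i n x : ℕ) (h1 : n.choose (i+1) ≤ x) (h2 : x < (n+1).choose (i+1)) :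
    ub (i+1) x = n.choose (i+2) + ub i (x - n.choose (i+1)) := by
  classical
  rcases Nat.eq_zero_or_pos x with rfl | hx
  · have hn : n < i + 1 := by
      by_contra h
      have := Nat.choose_pos (le_of_not_gt h)
      omega
    have : n.choose (i+2) = 0 := Nat.choose_eq_zero_of_lt (by omega)
    simp [ub_zero, this]
  · have hni : i + 1 ≤ n := by
      by_contra h
      -- n < i+1 so n+1 ≤ i+1, C(n+1, i+1) ≤ 1
      have : (n+1).choose (i+1) ≤ 1 := by
        rcases Nat.lt_or_ge (n+1) (i+1) with h' | h'
        · simp [Nat.choose_eq_zero_of_lt h']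
        · have : n + 1 = i + 1 := by omega
          rw [this, Nat.choose_self]
      omega
    have hfg : Nat.findGreatest (fun t => Nat.choose t (i + 1) ≤ x) (x + i + 1) = n := by
      rw [Nat.findGreatest_eq_iff]
      refine ⟨?_, fun _ => h1, fun t ht htle hPt => ?_⟩
      · have := choose_ge (i+1) n (by omega) hni
        omega
      · have : (n+1).choose (i+1) ≤ t.choose (i+1) := Nat.choose_le_choose _ (by omega)
        omega
    rw [show ub (i+1) x = if x = 0 then 0 else
      Nat.choose (Nat.findGreatest (fun t => Nat.choose t (i + 1) ≤ x) (x + i + 1)) (i + 2) +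
        ub i (x - Nat.choose (Nat.findGreatest (fun t => Nat.choose t (i + 1) ≤ x) (x + i + 1)) (i + 1)) from rfl]
    rw [if_neg (by omega), hfg]

lemma ub_cap (i n : ℕ) : ub (i+1) (n.choose (i+1)) = n.choose (i+2) := by
  rcases Nat.lt_or_ge n (i+1) with h | h
  · rw [Nat.choose_eq_zero_of_lt h, Nat.choose_eq_zero_of_lt (by omega), ub_zero]
  · rw [ub_row i n _ le_rfl (choose_lt (i+1) n (by omega) h)]
    simp [ub_zero]

lemma choose_two_step (a : ℕ) : (a+1).choose 2 = a.choose 2 + a := by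
  have h := Nat.choose_succ_succ' a 1
  norm_num at h
  omega

lemma ub_row_closed (i n x : ℕ) (h1 : n.choose (i+2) ≤ x)
    (h2 : x ≤ n.choose (i+2) + n.choose (i+1)) :
    ub (i+2) x = n.choose (i+3) + ub (i+1) (x - n.choose (i+2)) := by
  have hp : (n+1).choose (i+2) = n.choose (i+1) + n.choose (i+2) :=
    Nat.choose_succ_succ' n (i+1)
  rcases Nat.lt_or_ge x ((n+1).choose (i+2)) with h | h
  · exact ub_row (i+1) n x h1 h
  · have hx : x = (n+1).choose (i+2) := by omega
    subst hx
    rw [ub_cap (i+1) (n+1)]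
    have e1 : (n+1).choose (i+2) - n.choose (i+2) = n.choose (i+1) := by omega
    rw [e1, ub_cap i n]
    have := Nat.choose_succ_succ' n (i+2)
    have e2 : i + 2 + 1 = i + 3 := rfl
    rw [e2] at this
    rw [show i + 1 + 2 = i + 3 from rfl, this]
    omega

lemma ub_one_level (m : ℕ) : ub 1 m = m.choose 2 := by
  rcases Nat.eq_zero_or_pos m with rfl | hm
  · simp [ub_zero]
  · have := ub_row 0 m m (by simp [Nat.choose_one_right]) (by simp [Nat.choose_one_right])
    simpa [ub_zero] using this

lemma main_one : ∀ L n x : ℕ, x + L ≤ n →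
    (x+L).choose 2 + (n-L).choose 2 ≤ x.choose 2 + n.choose 2 := by
  intro L
  induction L with
  | zero => intro n x h; simp
  | succ L ih =>
    intro n x h
    have hn : 1 ≤ n := by omega
    have h1 := ih (n-1) x (by omega)
    rw [show x + (L+1) = (x+L) + 1 from by omega, show n - (L+1) = (n-1) - L from by omega,
      choose_two_step (x+L)]
    have e2 : n.choose 2 = (n-1).choose 2 + (n-1) := by
      conv_lhs => rw [show n = (n-1) + 1 from by omega]
      rw [choose_two_step]
    omega

lemma sup_one : ∀ x y : ℕ, x.choose 2 + y.choose 2 ≤ (x+y).choose 2 := by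
  intro x y
  induction y with
  | zero => simp
  | succ y ih =>
    have e1 : (x + (y+1)).choose 2 = (x+y).choose 2 + (x+y) := by
      rw [show x + (y+1) = (x+y) + 1 from by omega]
      exact choose_two_step (x+y)
    have e2 : (y+1).choose 2 = y.choose 2 + y := choose_two_step y
    omega

lemma choose_uni (q r : ℕ) (h : q.choose (r+1) < q.choose r) : q.choose (r+2) ≤ q.choose (r+1) := by
  rcases Nat.lt_or_ge q (r+2) with hq | hq
  · simp [Nat.choose_eq_zero_of_lt hq]
  · have h1 := Nat.choose_succ_right_eq q r
    have h2 := Nat.choose_succ_right_eq q (r+1)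
    have hpos : 0 < q.choose r := by omega
    have hpos1 : 0 < q.choose (r+1) := Nat.choose_pos (by omega)
    have hlt : q - r < r + 1 := by
      by_contra hcon
      have hle : q.choose r * (r+1) ≤ q.choose r * (q - r) :=
        Nat.mul_le_mul_left _ (by omega)
      have hlt2 : q.choose (r+1) * (r+1) < q.choose r * (r+1) :=
        Nat.mul_lt_mul_of_lt_of_le h le_rfl (by omega)
      omega
    have hfin : q.choose (r+2) * (r+2) ≤ q.choose (r+1) * (r+2) := by
      calc q.choose (r+2) * (r+2) = q.choose (r+1) * (q - (r+1)) := h2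
        _ ≤ q.choose (r+1) * (r+2) := Nat.mul_le_mul_left _ (by omega)
    exact Nat.le_of_mul_le_mul_right hfin (by omega)

theorem master : ∀ j : ℕ,
    (∀ n x L : ℕ, x + L ≤ n.choose j →
      ub j (x + L) + ub j (n.choose j - L) ≤ ub j x + n.choose (j+1)) ∧
    (∀ m L : ℕ, 2 ≤ j → L ≤ m.choose (j-1) → L ≤ m.choose j →
      m.choose (j+1) + ub (j-1) (m.choose (j-1) - L) ≤ m.choose j + ub j (m.choose j - L)) ∧
    (2 ≤ j → ∀ x : ℕ, ub j x ≤ ub (j-1) x) ∧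
    (∀ x y : ℕ, ub j x + ub j y ≤ ub j (x + y)) ∧
    (∀ q w : ℕ, 1 ≤ j → w ≤ q.choose (j-1) → w ≤ q.choose j →
      ub j (q.choose (j-1) - w) + q.choose (j+1) ≤ q.choose j + ub j (q.choose j - w)) := by
  intro j
  induction j using Nat.strong_induction_on with
  | _ j IH =>
  match j with
  | 0 =>
    refine ⟨?_, ?_, ?_, ?_, ?_⟩
    · intro n x L h
      simp [ub]
    · intro m L h2; omega
    · intro h2; omega
    · intro x y; simp [ub]
    · intro q w h1; omega
  | 1 =>
    refine ⟨?_, ?_, ?_, ?_, ?_⟩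
    · intro n x L h
      rw [Nat.choose_one_right] at h ⊢
      simp only [ub_one_level]
      exact main_one L n x h
    · intro m L h2; omega
    · intro h2; omega
    · intro x y; simp only [ub_one_level]; exact sup_one x y
    · intro q w _ h0 h1
      rw [show (1:ℕ) - 1 = 0 from rfl] at h0 ⊢
      rw [Nat.choose_zero_right] at h0 ⊢
      rw [show (1:ℕ)+1 = 2 from rfl]
      rw [Nat.choose_one_right] at h1 ⊢
      simp only [ub_one_level]
      interval_cases w
      · rw [show (1:ℕ) - 0 = 1 from rfl, show (1:ℕ).choose 2 = 0 from rfl, Nat.sub_zero]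
        omega
      · rw [show (1:ℕ) - 1 = 0 from rfl, show (0:ℕ).choose 2 = 0 from rfl]
        have h := choose_two_step (q-1)
        rw [show q - 1 + 1 = q from by omega] at h
        omega
  | (k+2) =>
    obtain ⟨M1', _, _, S1, X1'⟩ := IH (k+1) (by omega)
    have M1 : ∀ n x L : ℕ, x + L ≤ n.choose (k+1) →
        ub (k+1) (x + L) + ub (k+1) (n.choose (k+1) - L) ≤ ub (k+1) x + n.choose (k+2) := M1'
    have X1 : ∀ q w : ℕ, w ≤ q.choose k → w ≤ q.choose (k+1) →
        ub (k+1) (q.choose k - w) + q.choose (k+2) ≤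
          q.choose (k+1) + ub (k+1) (q.choose (k+1) - w) :=
      fun q w h1 h2 => X1' q w (by omega) h1 h2
    -- joint inner induction on n : MAIN(k+2, n) and TP(k+2, n)
    have key : ∀ n : ℕ,
        (∀ x L : ℕ, x + L ≤ n.choose (k+2) →
          ub (k+2) (x + L) + ub (k+2) (n.choose (k+2) - L) ≤ ub (k+2) x + n.choose (k+3)) ∧
        (∀ L : ℕ, L ≤ n.choose (k+1) → L ≤ n.choose (k+2) →
          n.choose (k+3) + ub (k+1) (n.choose (k+1) - L) ≤
            n.choose (k+2) + ub (k+2) (n.choose (k+2) - L)) := by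
      intro n
      induction n with
      | zero =>
        constructor
        · intro x L h
          rw [show (0:ℕ).choose (k+2) = 0 from rfl] at h ⊢
          rw [show (0:ℕ).choose (k+3) = 0 from rfl]
          have hx : x = 0 := by omega
          have hL : L = 0 := by omega
          subst hx; subst hL
          simp [ub_zero]
        · intro L hL1 hL2
          rw [show (0:ℕ).choose (k+1) = 0 from rfl] at hL1 ⊢
          rw [show (0:ℕ).choose (k+2) = 0 from rfl, show (0:ℕ).choose (k+3) = 0 from rfl]
          simp [ub_zero]
      | succ n ihn =>
        obtain ⟨Mn, Tn⟩ := ihn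
        have p1 : (n+1).choose (k+1) = n.choose k + n.choose (k+1) := Nat.choose_succ_succ' n k
        have p2 : (n+1).choose (k+2) = n.choose (k+1) + n.choose (k+2) :=
          Nat.choose_succ_succ' n (k+1)
        have p3 : (n+1).choose (k+3) = n.choose (k+2) + n.choose (k+3) :=
          Nat.choose_succ_succ' n (k+2)
        constructor
        · -- MAIN (k+2, n+1)
          intro x L h
          rcases Nat.eq_zero_or_pos L with rfl | hLpos
          · simp only [Nat.add_zero, Nat.sub_zero]
            have hc : ub (k+2) ((n+1).choose (k+2)) = (n+1).choose (k+3) := ub_cap (k+1) (n+1)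
            omega
          rcases le_or_gt (n.choose (k+2)) x with hxB | hxB
          · -- case α : B ≤ x
            have e1 := ub_row_closed k n (x + L) (by omega) (by omega)
            have e2 := ub_row_closed k n ((n+1).choose (k+2) - L) (by omega) (by omega)
            have e3 := ub_row_closed k n x hxB (by omega)
            rw [show x + L - n.choose (k+2) = (x - n.choose (k+2)) + L from by omega] at e1
            rw [show (n+1).choose (k+2) - L - n.choose (k+2) = n.choose (k+1) - L
              from by omega] at e2
            have hmain := M1 n (x - n.choose (k+2)) L (by omega)
            rw [e1, e2, e3]
            omega
          · rcases le_or_gt L (n.choose (k+1)) with hLA | hLA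
            · -- L ≤ A
              have e2 := ub_row_closed k n ((n+1).choose (k+2) - L) (by omega) (by omega)
              rw [show (n+1).choose (k+2) - L - n.choose (k+2) = n.choose (k+1) - L
                from by omega] at e2
              rcases le_or_gt (x + L) (n.choose (k+2)) with hxe | hxe
              · -- β1 : window inside lower block
                have h1 := Mn x L hxe
                have h2 := Tn L hLA (by omega)
                rw [e2]
                omega
              · -- β2 : straddle, L ≤ A
                have e1 := ub_row_closed k n (x + L) (by omega) (by omega)
                have hsup := S1 (x + L - n.choose (k+2)) (n.choose (k+1) - L)
                rw [show (x + L - n.choose (k+2)) + (n.choose (k+1) - L)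
                    = n.choose (k+1) - (n.choose (k+2) - x) from by omega] at hsup
                have h2 := Tn (n.choose (k+2) - x) (by omega) (by omega)
                rw [show n.choose (k+2) - (n.choose (k+2) - x) = x from by omega] at h2
                rw [e1, e2]
                omega
            · -- A < L
              rcases le_or_gt (x + L) (n.choose (k+2)) with hxe | hxe
              · -- γ1 : window inside lower block, L > A
                have h1 := Mn (x + L - n.choose (k+1)) (n.choose (k+1)) (by omega)
                rw [show x + L - n.choose (k+1) + n.choose (k+1) = x + L from by omega] at h1
                have h2 := Mn x (L - n.choose (k+1)) (by omega)
                rw [show x + (L - n.choose (k+1)) = x + L - n.choose (k+1) from by omega,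
                    show n.choose (k+2) - (L - n.choose (k+1)) = (n+1).choose (k+2) - L
                      from by omega] at h2
                have h3 := Tn (n.choose (k+1)) le_rfl (by omega)
                rw [Nat.sub_self, ub_zero] at h3
                omega
              · -- γ2 : straddle, L > A
                have e1 := ub_row_closed k n (x + L) (by omega) (by omega)
                have h1 := Mn x (n.choose (k+1) - (x + L - n.choose (k+2))) (by omega)
                rw [show x + (n.choose (k+1) - (x + L - n.choose (k+2)))
                    = (n+1).choose (k+2) - L from by omega] at h1
                have h2 := Tn (n.choose (k+1) - (x + L - n.choose (k+2))) (by omega) (by omega)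
                rw [show n.choose (k+1) - (n.choose (k+1) - (x + L - n.choose (k+2)))
                    = x + L - n.choose (k+2) from by omega] at h2
                rw [e1]
                omega
        · -- TP (k+2, n+1)
          intro L hL1 hL2
          rcases Nat.eq_zero_or_pos L with rfl | hLpos
          · simp only [Nat.sub_zero]
            have c1 : ub (k+1) ((n+1).choose (k+1)) = (n+1).choose (k+2) := ub_cap k (n+1)
            have c2 : ub (k+2) ((n+1).choose (k+2)) = (n+1).choose (k+3) := ub_cap (k+1) (n+1)
            omega
          rcases le_or_gt L (n.choose (k+1)) with hLa | hLa
          · -- case (a) : L ≤ α'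
            have e1 := ub_row_closed k n ((n+1).choose (k+2) - L) (by omega) (by omega)
            rw [show (n+1).choose (k+2) - L - n.choose (k+2) = n.choose (k+1) - L
              from by omega] at e1
            have hmain := M1 (n+1) (n.choose (k+1) - L) (n.choose k) (by omega)
            rw [show (n.choose (k+1) - L) + n.choose k = (n+1).choose (k+1) - L from by omega,
                show (n+1).choose (k+1) - n.choose k = n.choose (k+1) from by omega] at hmain
            have hcap : ub (k+1) (n.choose (k+1)) = n.choose (k+2) := ub_cap k n
            rw [e1]
            omega
          · -- case (b) : α' < L, w := L - α'
            have hwβ : L - n.choose (k+1) ≤ n.choose k := by omega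
            have hwB : L - n.choose (k+1) ≤ n.choose (k+2) := by omega
            have hwα : L - n.choose (k+1) ≤ n.choose (k+1) := by
              rcases le_or_gt (n.choose k) (n.choose (k+1)) with hcc | hcc
              · omega
              · have := choose_uni n k hcc
                omega
            have ht := Tn (L - n.choose (k+1)) hwα hwB
            have hx := X1 n (L - n.choose (k+1)) hwβ hwα
            rw [show (n+1).choose (k+1) - L = n.choose k - (L - n.choose (k+1)) from by omega,
                show (n+1).choose (k+2) - L = n.choose (k+2) - (L - n.choose (k+1))
                  from by omega]
            omega
    -- clm : C(n, k+3) ≤ ub (k+1) (C(n, k+2))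
    have clm : ∀ n : ℕ, n.choose (k+3) ≤ ub (k+1) (n.choose (k+2)) := by
      intro n
      induction n with
      | zero => rw [show (0:ℕ).choose (k+3) = 0 from rfl]; omega
      | succ n ih =>
        have hs := S1 (n.choose (k+1)) (n.choose (k+2))
        have hcap : ub (k+1) (n.choose (k+1)) = n.choose (k+2) := ub_cap k n
        rw [hcap, show n.choose (k+1) + n.choose (k+2) = (n+1).choose (k+2) from
          (Nat.choose_succ_succ' n (k+1)).symm] at hs
        have p3 : (n+1).choose (k+3) = n.choose (k+2) + n.choose (k+3) :=
          Nat.choose_succ_succ' n (k+2)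
        omega
    -- DEC at level k+2
    have dec : ∀ x, ub (k+2) x ≤ ub (k+1) x := by
      intro x
      rcases Nat.eq_zero_or_pos x with rfl | hx
      · simp [ub_zero]
      obtain ⟨n, hn1, hn2, hn3⟩ := exists_row (k+2) x (by omega) hx
      have e : ub (k+2) x = n.choose (k+3) + ub (k+1) (x - n.choose (k+2)) :=
        ub_row (k+1) n x hn2 hn3
      have hs := S1 (n.choose (k+2)) (x - n.choose (k+2))
      rw [show n.choose (k+2) + (x - n.choose (k+2)) = x from by omega] at hs
      have := clm n
      omega
    -- SUP at level k+2
    have sup : ∀ x y, ub (k+2) x + ub (k+2) y ≤ ub (k+2) (x + y) := by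
      intro x y
      rcases Nat.eq_zero_or_pos x with rfl | hx
      · simp [ub_zero]
      rcases Nat.eq_zero_or_pos y with rfl | hy
      · simp [ub_zero]
      obtain ⟨n, hn1, hn2, hn3⟩ := exists_row (k+2) (x + y) (by omega) (by omega)
      rcases le_or_gt (n.choose (k+2)) x with hcx | hcx
      · have e : ub (k+2) (x + y) = n.choose (k+3) + ub (k+1) (x + y - n.choose (k+2)) :=
          ub_row (k+1) n (x + y) hn2 hn3
        have ex : ub (k+2) x = n.choose (k+3) + ub (k+1) (x - n.choose (k+2)) :=
          ub_row (k+1) n x hcx (show x < (n+1).choose (k+2) by omega)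
        have hd := dec y
        have hs := S1 (x - n.choose (k+2)) y
        rw [show x - n.choose (k+2) + y = x + y - n.choose (k+2) from by omega] at hs
        omega
      rcases le_or_gt (n.choose (k+2)) y with hcy | hcy
      · have e : ub (k+2) (x + y) = n.choose (k+3) + ub (k+1) (x + y - n.choose (k+2)) :=
          ub_row (k+1) n (x + y) hn2 hn3
        have ey : ub (k+2) y = n.choose (k+3) + ub (k+1) (y - n.choose (k+2)) :=
          ub_row (k+1) n y hcy (show y < (n+1).choose (k+2) by omega)
        have hd := dec x
        have hs := S1 x (y - n.choose (k+2))
        rw [show x + (y - n.choose (k+2)) = x + y - n.choose (k+2) from by omega] at hs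
        omega
      · -- both below the cap
        have e : ub (k+2) (x + y) = n.choose (k+3) + ub (k+1) (x + y - n.choose (k+2)) :=
          ub_row (k+1) n (x + y) hn2 hn3
        have hmm := (key n).1 (x + y - n.choose (k+2)) (x - (x + y - n.choose (k+2)))
          (by omega)
        rw [show (x + y - n.choose (k+2)) + (x - (x + y - n.choose (k+2))) = x from by omega,
            show n.choose (k+2) - (x - (x + y - n.choose (k+2))) = y from by omega] at hmm
        have hd := dec (x + y - n.choose (k+2))
        omega
    refine ⟨fun n => (key n).1, ?_, fun _ => dec, sup, ?_⟩
    · intro m L _ hL1 hL2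
      exact (key m).2 L hL1 hL2
    · intro q w _ h1 h2
      have h1' : w ≤ q.choose (k+1) := h1
      have ht := (key q).2 w h1' h2
      have hd := dec (q.choose (k+1) - w)
      have hgoal : ub (k+2) (q.choose (k+1) - w) + q.choose (k+3) ≤
          q.choose (k+2) + ub (k+2) (q.choose (k+2) - w) := by omega
      exact hgoal

/-- for positive integers `i`, `N` and nonnegative integers
`m, m₁, m₂ ≤ C(N,i)` with `m₁ + m₂ = m + C(N,i)`, one has
`m₁^(i) + m₂^(i) ≤ m^(i) + C(N, i+1)`. -/
theorem ub_add_le (i N m m₁ m₂ : ℕ) (hi : 0 < i) (hN : 0 < N)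
    (hm : m ≤ Nat.choose N i) (hm₁ : m₁ ≤ Nat.choose N i) (hm₂ : m₂ ≤ Nat.choose N i)
    (hsum : m₁ + m₂ = m + Nat.choose N i) :
    ub i m₁ + ub i m₂ ≤ ub i m + Nat.choose N (i + 1) := by
  have main := (master i).1 N m (m₂ - m) (by omega)
  rw [show m + (m₂ - m) = m₂ from by omega,
      show N.choose i - (m₂ - m) = m₁ from by omega] at main
  omega
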